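/- Let Δ be the free abelian group on two generators ζ and τ. The space of higher order invariants Map(Δ, ℂ)^{Δ,q+1} of order q+1 has dimension (q+1)(q+2)/2 over ℂ, with basis given by the functions φ^{(l,m)} with l, m ≥ 0 and l+m ≤ q, where φ^{(l,m)}(ζ^a τ^b) = Q_l(a)Q_m(b) for the polynomials Q_n defined by Q₀=1, Q_{n+1}(X+1)−Q_{n+1}(X)=Q_n(X), Q_n(0)=0 (n≥1). -/

import Mathlib

/-- The free abelian group `Δ` on the two generators `ζ` and `τ` is modelled as `ℤ × ℤ`
(additively), `ζ^a τ^b ↔ (a, b)`.  `transD γ` is the `ℂ`-linear operator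
`f ↦ f|(γ−1) = f(γ + ·) − f` on `Map(Δ, ℂ)` coming from the left-translation action. -/
noncomputable def transD (γ : ℤ × ℤ) : ((ℤ × ℤ) → ℂ) →ₗ[ℂ] ((ℤ × ℤ) → ℂ) where
  toFun f := (fun δ => f (γ + δ)) - f
  map_add' f g := by
    funext δ
    simp only [Pi.add_apply, Pi.sub_apply]
    ring
  map_smul' c f := by
    funext δ
    simp only [Pi.smul_apply, Pi.sub_apply, RingHom.id_apply, smul_eq_mul]
    ring

/-- Higher order invariants `Map(Δ,ℂ)^{Δ,q}` as `ℂ`-submodules: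
level `0` is `⊥`, level `q+1` is `{f : ∀ γ, f|(γ−1) ∈ level q}`. -/
noncomputable def HI : ℕ → Submodule ℂ ((ℤ × ℤ) → ℂ)
  | 0 => ⊥
  | q + 1 => ⨅ γ : ℤ × ℤ, (HI q).comap (transD γ)

/-- `phi Q l m` is the function `φ^{(l,m)}(ζ^a τ^b) = Q_l(a) Q_m(b)`. -/
noncomputable def phi (Q : ℕ → Polynomial ℚ) (l m : ℕ) (p : ℤ × ℤ) : ℂ :=
  (((Q l).eval (p.1 : ℚ) * (Q m).eval (p.2 : ℚ) : ℚ) : ℂ)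

lemma transD_apply (γ : ℤ × ℤ) (f : (ℤ × ℤ) → ℂ) (x : ℤ × ℤ) :
    transD γ f x = f (γ + x) - f x := rfl

lemma HI_zero : HI 0 = ⊥ := rfl

lemma HI_succ (q : ℕ) : HI (q + 1) = ⨅ γ : ℤ × ℤ, (HI q).comap (transD γ) := rfl

lemma mem_HI_succ {f : (ℤ × ℤ) → ℂ} {q : ℕ} :
    f ∈ HI (q + 1) ↔ ∀ γ, transD γ f ∈ HI q := by
  rw [HI_succ]
  simp [Submodule.mem_iInf]

lemma HI_mono : ∀ q, HI q ≤ HI (q + 1)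
  | 0 => bot_le
  | q + 1 => by
      rw [HI_succ, HI_succ (q+1)]
      exact le_iInf fun γ => iInf_le_of_le γ (Submodule.comap_mono (HI_mono q))

lemma HI_stable {q : ℕ} {f : (ℤ × ℤ) → ℂ} (hf : f ∈ HI q) (γ : ℤ × ℤ) :
    transD γ f ∈ HI q := by
  cases q with
  | zero =>
      rw [HI_zero, Submodule.mem_bot] at hf ⊢
      rw [hf, map_zero]
  | succ q => exact HI_mono q (mem_HI_succ.mp hf γ)

lemma transD_zero_fun (f : (ℤ × ℤ) → ℂ) : transD 0 f = 0 := by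
  funext x
  simp [transD_apply]

lemma transD_add (γ δ : ℤ × ℤ) (f : (ℤ × ℤ) → ℂ) :
    transD (γ + δ) f = transD γ f + transD δ f + transD γ (transD δ f) := by
  funext x
  simp only [transD_apply, Pi.add_apply]
  rw [show γ + δ + x = δ + (γ + x) by ring]
  ring

lemma transD_comm (γ δ : ℤ × ℤ) : transD γ * transD δ = transD δ * transD γ := by
  apply LinearMap.ext
  intro f
  funext x
  simp only [Module.End.mul_apply, transD_apply]
  rw [show γ + (δ + x) = δ + (γ + x) by ring]
  ring

lemma mem_HI_succ_of_gen {q : ℕ} {f : (ℤ × ℤ) → ℂ}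
    (h1 : transD (1, 0) f ∈ HI q) (h2 : transD (0, 1) f ∈ HI q) :
    f ∈ HI (q + 1) := by
  have hzero : transD (0 : ℤ × ℤ) f ∈ HI q := by
    rw [transD_zero_fun]; exact zero_mem _
  have hadd : ∀ γ δ : ℤ × ℤ, transD γ f ∈ HI q → transD δ f ∈ HI q →
      transD (γ + δ) f ∈ HI q := by
    intro γ δ hγ hδ
    rw [transD_add]
    exact add_mem (add_mem hγ hδ) (HI_stable hδ γ)
  have hneg : ∀ γ : ℤ × ℤ, transD γ f ∈ HI q → transD (-γ) f ∈ HI q := by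
    intro γ hγ
    have e0 : transD (-γ) f + (transD γ f + transD (-γ) (transD γ f)) = 0 := by
      have := transD_add (-γ) γ f
      rw [neg_add_cancel, transD_zero_fun] at this
      rw [← add_assoc, ← this]
    rw [eq_neg_of_add_eq_zero_left e0]
    exact neg_mem (add_mem hγ (HI_stable hγ (-γ)))
  have hrow : ∀ a : ℤ, transD (a, 0) f ∈ HI q := by
    intro a
    induction a using Int.induction_on with
    | zero => exact hzero
    | succ i ih =>
        have := hadd _ _ ih h1
        have he : ((i : ℤ), (0 : ℤ)) + (1, 0) = ((i : ℤ) + 1, 0) := by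
          simp [Prod.ext_iff]
        rwa [he] at this
    | pred i ih =>
        have := hadd _ _ ih (hneg _ h1)
        have he : ((-i : ℤ), (0 : ℤ)) + -(1, 0) = ((-i : ℤ) - 1, 0) := by
          simp [Prod.ext_iff]; try ring
        rwa [he] at this
  have hcol : ∀ b : ℤ, transD (0, b) f ∈ HI q := by
    intro b
    induction b using Int.induction_on with
    | zero => exact hzero
    | succ i ih =>
        have := hadd _ _ ih h2
        have he : ((0 : ℤ), (i : ℤ)) + (0, 1) = (0, (i : ℤ) + 1) := by
          simp [Prod.ext_iff]
        rwa [he] at this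
    | pred i ih =>
        have := hadd _ _ ih (hneg _ h2)
        have he : ((0 : ℤ), (-i : ℤ)) + -(0, 1) = (0, (-i : ℤ) - 1) := by
          simp [Prod.ext_iff]; try ring
        rwa [he] at this
  rw [mem_HI_succ]
  intro γ
  have := hadd _ _ (hrow γ.1) (hcol γ.2)
  have he : ((γ.1 : ℤ), (0 : ℤ)) + (0, γ.2) = γ := by simp [Prod.ext_iff]
  rwa [he] at this

section PhiLemmas

variable {Q : ℕ → Polynomial ℚ}

lemma eval_rec (hrec : ∀ n : ℕ, (Q (n + 1)).comp (Polynomial.X + 1) - Q (n + 1) = Q n)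
    (n : ℕ) (x : ℚ) :
    (Q (n + 1)).eval (x + 1) - (Q (n + 1)).eval x = (Q n).eval x := by
  have := congrArg (Polynomial.eval x) (hrec n)
  simpa [Polynomial.eval_comp] using this

lemma D1_phi_succ (hrec : ∀ n : ℕ, (Q (n + 1)).comp (Polynomial.X + 1) - Q (n + 1) = Q n)
    (l m : ℕ) : transD (1, 0) (phi Q (l + 1) m) = phi Q l m := by
  funext x
  obtain ⟨a, b⟩ := x
  have he : ((1 : ℤ), (0 : ℤ)) + (a, b) = (a + 1, b) := by simp [Prod.ext_iff]; try ring
  rw [transD_apply, he]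
  show ((((Q (l+1)).eval ((a + 1 : ℤ) : ℚ) * (Q m).eval (b : ℚ) : ℚ)) : ℂ) -
      (((Q (l+1)).eval ((a : ℤ) : ℚ) * (Q m).eval (b : ℚ) : ℚ) : ℂ) =
      (((Q l).eval ((a : ℤ) : ℚ) * (Q m).eval (b : ℚ) : ℚ) : ℂ)
  have h : (Q (l+1)).eval (((a : ℚ)) + 1) * (Q m).eval (b : ℚ) -
      (Q (l+1)).eval (a : ℚ) * (Q m).eval (b : ℚ) =
      (Q l).eval (a : ℚ) * (Q m).eval (b : ℚ) := by
    have := eval_rec hrec l (a : ℚ)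
    linear_combination (Q m).eval (b : ℚ) * this
  exact_mod_cast h

lemma D2_phi_succ (hrec : ∀ n : ℕ, (Q (n + 1)).comp (Polynomial.X + 1) - Q (n + 1) = Q n)
    (l m : ℕ) : transD (0, 1) (phi Q l (m + 1)) = phi Q l m := by
  funext x
  obtain ⟨a, b⟩ := x
  have he : ((0 : ℤ), (1 : ℤ)) + (a, b) = (a, b + 1) := by simp [Prod.ext_iff]; try ring
  rw [transD_apply, he]
  show ((((Q l).eval ((a : ℤ) : ℚ) * (Q (m+1)).eval ((b + 1 : ℤ) : ℚ) : ℚ)) : ℂ) -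
      (((Q l).eval ((a : ℤ) : ℚ) * (Q (m+1)).eval ((b : ℤ) : ℚ) : ℚ) : ℂ) =
      (((Q l).eval ((a : ℤ) : ℚ) * (Q m).eval ((b : ℤ) : ℚ) : ℚ) : ℂ)
  have h : (Q l).eval (a : ℚ) * (Q (m+1)).eval ((b : ℚ) + 1) -
      (Q l).eval (a : ℚ) * (Q (m+1)).eval (b : ℚ) =
      (Q l).eval (a : ℚ) * (Q m).eval (b : ℚ) := by
    have := eval_rec hrec m (b : ℚ)
    linear_combination (Q l).eval (a : ℚ) * this
  exact_mod_cast h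

lemma D1_phi_zero (h0 : Q 0 = 1) (m : ℕ) : transD (1, 0) (phi Q 0 m) = 0 := by
  funext x
  obtain ⟨a, b⟩ := x
  simp [transD_apply, phi, h0]

lemma D2_phi_zero (h0 : Q 0 = 1) (l : ℕ) : transD (0, 1) (phi Q l 0) = 0 := by
  funext x
  obtain ⟨a, b⟩ := x
  simp [transD_apply, phi, h0]

lemma phi_eval_zero (h0 : Q 0 = 1) (hval : ∀ n : ℕ, 1 ≤ n → (Q n).eval 0 = 0)
    (l m : ℕ) : phi Q l m (0, 0) = if l = 0 ∧ m = 0 then 1 else 0 := by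
  simp only [phi]
  cases l with
  | zero =>
      cases m with
      | zero => simp [h0]
      | succ m => simp [h0, hval (m+1) (by omega)]
  | succ l => simp [hval (l+1) (by omega)]

lemma phi_mem (h0 : Q 0 = 1)
    (hrec : ∀ n : ℕ, (Q (n + 1)).comp (Polynomial.X + 1) - Q (n + 1) = Q n) :
    ∀ q l m : ℕ, l + m ≤ q → phi Q l m ∈ HI (q + 1) := by
  intro q
  induction q with
  | zero =>
      intro l m hlm
      obtain ⟨rfl, rfl⟩ : l = 0 ∧ m = 0 := by omega
      apply mem_HI_succ_of_gen
      · rw [D1_phi_zero h0]; exact zero_mem _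
      · rw [D2_phi_zero h0]; exact zero_mem _
  | succ q ih =>
      intro l m hlm
      apply mem_HI_succ_of_gen
      · cases l with
        | zero => rw [D1_phi_zero h0]; exact zero_mem _
        | succ l => rw [D1_phi_succ hrec]; exact ih l m (by omega)
      · cases m with
        | zero => rw [D2_phi_zero h0]; exact zero_mem _
        | succ m => rw [D2_phi_succ hrec]; exact ih l m (by omega)

end PhiLemmas

noncomputable def Efun (l m : ℕ) : ((ℤ × ℤ) → ℂ) →ₗ[ℂ] ℂ :=
  LinearMap.proj ((0 : ℤ), (0 : ℤ)) ∘ₗ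
    ((transD (1, 0)) ^ l * (transD (0, 1)) ^ m : ((ℤ × ℤ) → ℂ) →ₗ[ℂ] ((ℤ × ℤ) → ℂ))

lemma Efun_apply (l m : ℕ) (f : (ℤ × ℤ) → ℂ) :
    Efun l m f = (((transD (1, 0)) ^ l) (((transD (0, 1)) ^ m) f)) ((0 : ℤ), (0 : ℤ)) := rfl

section PhiLemmas2

variable {Q : ℕ → Polynomial ℚ}

lemma pow_D1_phi (h0 : Q 0 = 1)
    (hrec : ∀ n : ℕ, (Q (n + 1)).comp (Polynomial.X + 1) - Q (n + 1) = Q n) :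
    ∀ l l' m' : ℕ, ((transD (1, 0)) ^ l) (phi Q l' m') =
      if l ≤ l' then phi Q (l' - l) m' else 0 := by
  intro l
  induction l with
  | zero => intro l' m'; simp
  | succ l ih =>
      intro l' m'
      rw [pow_succ, Module.End.mul_apply]
      cases l' with
      | zero =>
          rw [D1_phi_zero h0, map_zero]
          simp
      | succ l' =>
          rw [D1_phi_succ hrec, ih l' m']
          by_cases h : l ≤ l'
          · rw [if_pos h, if_pos (by omega)]
            have h' : l' + 1 - (l + 1) = l' - l := by omega
            rw [h']
          · rw [if_neg h, if_neg (by omega)]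

lemma pow_D2_phi (h0 : Q 0 = 1)
    (hrec : ∀ n : ℕ, (Q (n + 1)).comp (Polynomial.X + 1) - Q (n + 1) = Q n) :
    ∀ m l' m' : ℕ, ((transD (0, 1)) ^ m) (phi Q l' m') =
      if m ≤ m' then phi Q l' (m' - m) else 0 := by
  intro m
  induction m with
  | zero => intro l' m'; simp
  | succ m ih =>
      intro l' m'
      rw [pow_succ, Module.End.mul_apply]
      cases m' with
      | zero =>
          rw [D2_phi_zero h0, map_zero]
          simp
      | succ m' =>
          rw [D2_phi_succ hrec, ih l' m']
          by_cases h : m ≤ m'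
          · rw [if_pos h, if_pos (by omega)]
            have h' : m' + 1 - (m + 1) = m' - m := by omega
            rw [h']
          · rw [if_neg h, if_neg (by omega)]

lemma E_phi (h0 : Q 0 = 1)
    (hrec : ∀ n : ℕ, (Q (n + 1)).comp (Polynomial.X + 1) - Q (n + 1) = Q n)
    (hval : ∀ n : ℕ, 1 ≤ n → (Q n).eval 0 = 0)
    (l m l' m' : ℕ) :
    Efun l m (phi Q l' m') = if l' = l ∧ m' = m then 1 else 0 := by
  rw [Efun_apply, pow_D2_phi h0 hrec]
  by_cases h2 : m ≤ m'
  · rw [if_pos h2, pow_D1_phi h0 hrec]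
    by_cases h1 : l ≤ l'
    · rw [if_pos h1, phi_eval_zero h0 hval]
      by_cases h : l' = l ∧ m' = m
      · rw [if_pos h, if_pos (by omega)]
      · rw [if_neg h, if_neg (by omega)]
    · rw [if_neg h1]
      simp only [Pi.zero_apply]
      rw [if_neg (by omega)]
  · rw [if_neg h2, map_zero]
    simp only [Pi.zero_apply]
    rw [if_neg (by omega)]

end PhiLemmas2

lemma const_of_D1 {f : (ℤ × ℤ) → ℂ} (h : transD (1, 0) f = 0) (a b : ℤ) :
    f (a, b) = f (0, b) := by
  have step : ∀ x : ℤ × ℤ, f ((1, 0) + x) = f x := by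
    intro x
    have := congrFun h x
    simpa [transD_apply, sub_eq_zero] using this
  induction a using Int.induction_on with
  | zero => rfl
  | succ i ih =>
      have := step ((i : ℤ), b)
      have he : ((1 : ℤ), (0 : ℤ)) + ((i : ℤ), b) = ((i : ℤ) + 1, b) := by
        simp [Prod.ext_iff]; try ring
      rw [he] at this
      rw [this, ih]
  | pred i ih =>
      have := step ((-i : ℤ) - 1, b)
      have he : ((1 : ℤ), (0 : ℤ)) + ((-i : ℤ) - 1, b) = ((-i : ℤ), b) := by
        simp [Prod.ext_iff]; try ring
      rw [he] at this
      rw [← this, ih]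

lemma const_of_D2 {f : (ℤ × ℤ) → ℂ} (h : transD (0, 1) f = 0) (a b : ℤ) :
    f (a, b) = f (a, 0) := by
  have step : ∀ x : ℤ × ℤ, f ((0, 1) + x) = f x := by
    intro x
    have := congrFun h x
    simpa [transD_apply, sub_eq_zero] using this
  induction b using Int.induction_on with
  | zero => rfl
  | succ i ih =>
      have := step (a, (i : ℤ))
      have he : ((0 : ℤ), (1 : ℤ)) + (a, (i : ℤ)) = (a, (i : ℤ) + 1) := by
        simp [Prod.ext_iff]; try ring
      rw [he] at this
      rw [this, ih]
  | pred i ih =>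
      have := step (a, (-i : ℤ) - 1)
      have he : ((0 : ℤ), (1 : ℤ)) + (a, (-i : ℤ) - 1) = (a, (-i : ℤ)) := by
        simp [Prod.ext_iff]; try ring
      rw [he] at this
      rw [← this, ih]

lemma const_fun {Q : ℕ → Polynomial ℚ} (h0 : Q 0 = 1) {f : (ℤ × ℤ) → ℂ}
    (h1 : transD (1, 0) f = 0) (h2 : transD (0, 1) f = 0) :
    f = f (0, 0) • phi Q 0 0 := by
  funext x
  obtain ⟨a, b⟩ := x
  have : f (a, b) = f (0, 0) := by rw [const_of_D1 h1, const_of_D2 h2]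
  rw [this]
  simp [phi, h0]

def idxFinset (q : ℕ) : Finset (ℕ × ℕ) :=
  (Finset.range (q + 1)).biUnion fun n => Finset.HasAntidiagonal.antidiagonal n

lemma mem_idxFinset {q : ℕ} {x : ℕ × ℕ} : x ∈ idxFinset q ↔ x.1 + x.2 ≤ q := by
  simp only [idxFinset, Finset.mem_biUnion, Finset.mem_range, Finset.HasAntidiagonal.mem_antidiagonal]
  constructor
  · rintro ⟨n, hn, h⟩; omega
  · intro h; exact ⟨x.1 + x.2, by omega, rfl⟩

instance idxFintype (q : ℕ) : Fintype {x : ℕ × ℕ // x.1 + x.2 ≤ q} :=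
  Fintype.ofFinset (idxFinset q) fun x => mem_idxFinset

lemma card_idx (q : ℕ) :
    Fintype.card {x : ℕ × ℕ // x.1 + x.2 ≤ q} = (q + 1) * (q + 2) / 2 := by
  rw [Fintype.card_of_subtype (idxFinset q) fun x => mem_idxFinset]
  have : (idxFinset q).card = ∑ n ∈ Finset.range (q + 1), (n + 1) := by
    rw [idxFinset, Finset.card_biUnion]
    · exact Finset.sum_congr rfl fun n _ => Finset.Nat.card_antidiagonal n
    · intro a _ b _ hab
      simp only [Finset.disjoint_left]
      intro x hx hx'
      rw [Finset.HasAntidiagonal.mem_antidiagonal] at hx hx'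
      omega
  rw [this]
  have h2 : (∑ n ∈ Finset.range (q + 1), (n + 1)) * 2 = (q + 1) * (q + 2) := by
    have h3 := Finset.sum_range_id_mul_two (q + 2)
    rw [Finset.sum_range_succ'] at h3
    simp only [add_zero] at h3
    rw [h3]
    have : q + 2 - 1 = q + 1 := by omega
    rw [this, Nat.mul_comm]
  omega

section Main

variable {Q : ℕ → Polynomial ℚ}

lemma Efun_sum_delta (h0 : Q 0 = 1)
    (hrec : ∀ n : ℕ, (Q (n + 1)).comp (Polynomial.X + 1) - Q (n + 1) = Q n)
    (hval : ∀ n : ℕ, 1 ≤ n → (Q n).eval 0 = 0)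
    {q : ℕ} (s : Finset {x : ℕ × ℕ // x.1 + x.2 ≤ q}) (c : {x : ℕ × ℕ // x.1 + x.2 ≤ q} → ℂ)
    (i : {x : ℕ × ℕ // x.1 + x.2 ≤ q}) (hi : i ∈ s) :
    Efun i.1.1 i.1.2 (∑ j ∈ s, c j • phi Q j.1.1 j.1.2) = c i := by
  rw [map_sum]
  have key : ∀ j ∈ s, Efun i.1.1 i.1.2 (c j • phi Q j.1.1 j.1.2) =
      if j = i then c j else 0 := by
    intro j _
    rw [map_smul, E_phi h0 hrec hval, smul_eq_mul, mul_ite, mul_one, mul_zero]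
    by_cases h : j = i
    · rw [if_pos, if_pos h]
      subst h; exact ⟨rfl, rfl⟩
    · rw [if_neg, if_neg h]
      intro hcon
      exact h (Subtype.ext (Prod.ext hcon.1 hcon.2))
  rw [Finset.sum_congr rfl key, Finset.sum_ite_eq' s i, if_pos hi]

lemma phi_linearIndependent (h0 : Q 0 = 1)
    (hrec : ∀ n : ℕ, (Q (n + 1)).comp (Polynomial.X + 1) - Q (n + 1) = Q n)
    (hval : ∀ n : ℕ, 1 ≤ n → (Q n).eval 0 = 0) (q : ℕ) :
    LinearIndependent ℂ (fun x : {x : ℕ × ℕ // x.1 + x.2 ≤ q} => phi Q x.1.1 x.1.2) := by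
  rw [linearIndependent_iff']
  intro s c hsum i hi
  have := congrArg (Efun i.1.1 i.1.2) hsum
  rw [map_zero, Efun_sum_delta h0 hrec hval s c i hi] at this
  exact this

lemma span_le_HI (h0 : Q 0 = 1)
    (hrec : ∀ n : ℕ, (Q (n + 1)).comp (Polynomial.X + 1) - Q (n + 1) = Q n) (q : ℕ) :
    Submodule.span ℂ
        (Set.range (fun x : {x : ℕ × ℕ // x.1 + x.2 ≤ q} => phi Q x.1.1 x.1.2)) ≤
      HI (q + 1) := by
  rw [Submodule.span_le]
  rintro _ ⟨i, rfl⟩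
  exact phi_mem h0 hrec q i.1.1 i.1.2 i.2

lemma HI_le_span (h0 : Q 0 = 1)
    (hrec : ∀ n : ℕ, (Q (n + 1)).comp (Polynomial.X + 1) - Q (n + 1) = Q n)
    (hval : ∀ n : ℕ, 1 ≤ n → (Q n).eval 0 = 0) :
    ∀ q : ℕ, HI (q + 1) ≤ Submodule.span ℂ
        (Set.range (fun x : {x : ℕ × ℕ // x.1 + x.2 ≤ q} => phi Q x.1.1 x.1.2)) := by
  intro q
  induction q with
  | zero =>
      intro f hf
      have h1 : transD (1, 0) f = 0 := by
        have := mem_HI_succ.mp hf (1, 0)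
        rwa [HI_zero, Submodule.mem_bot] at this
      have h2 : transD (0, 1) f = 0 := by
        have := mem_HI_succ.mp hf (0, 1)
        rwa [HI_zero, Submodule.mem_bot] at this
      rw [const_fun h0 h1 h2]
      exact Submodule.smul_mem _ _
        (Submodule.subset_span ⟨⟨(0, 0), by omega⟩, rfl⟩)
  | succ q ih =>
      intro f hf
      obtain ⟨c, hc⟩ := (Submodule.mem_span_range_iff_exists_fun ℂ).mp
        (ih (mem_HI_succ.mp hf (1, 0)))
      set g : (ℤ × ℤ) → ℂ :=
        f - ∑ i : {x : ℕ × ℕ // x.1 + x.2 ≤ q}, c i • phi Q (i.1.1 + 1) i.1.2 with hgdef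
      have hgmem : g ∈ HI (q + 2) :=
        sub_mem hf (Submodule.sum_mem _ fun i _ => Submodule.smul_mem _ _
          (phi_mem h0 hrec (q + 1) _ _ (by have := i.2; omega)))
      have hg1 : transD (1, 0) g = 0 := by
        simp only [hgdef, map_sub, map_sum, map_smul, D1_phi_succ hrec]
        rw [hc]
        exact sub_self _
      obtain ⟨d, hd⟩ := (Submodule.mem_span_range_iff_exists_fun ℂ).mp
        (ih (mem_HI_succ.mp hgmem (0, 1)))
      have hdvanish : ∀ (i : {x : ℕ × ℕ // x.1 + x.2 ≤ q}) (l : ℕ),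
          i.1.1 = l + 1 → d i = 0 := by
        intro i l hi1
        have e1 := Efun_sum_delta h0 hrec hval Finset.univ d i (Finset.mem_univ i)
        rw [hd] at e1
        rw [← e1, hi1, Efun_apply]
        have hAB : Commute (transD ((1 : ℤ), (0 : ℤ))) (transD ((0 : ℤ), (1 : ℤ))) :=
          transD_comm (1, 0) (0, 1)
        have hmul : (transD ((1 : ℤ), (0 : ℤ))) ^ (l + 1) *
            ((transD ((0 : ℤ), (1 : ℤ))) ^ i.1.2 * transD (0, 1)) =
            ((transD ((1 : ℤ), (0 : ℤ))) ^ l * (transD ((0 : ℤ), (1 : ℤ))) ^ (i.1.2 + 1)) *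
              transD (1, 0) := by
          rw [← pow_succ, pow_succ (transD ((1 : ℤ), (0 : ℤ))) l, mul_assoc, mul_assoc]
          congr 1
          exact (hAB.pow_right (i.1.2 + 1)).eq
        have e3 : ((transD ((1 : ℤ), (0 : ℤ))) ^ (l + 1))
            (((transD ((0 : ℤ), (1 : ℤ))) ^ i.1.2) (transD (0, 1) g)) =
            ((transD ((1 : ℤ), (0 : ℤ))) ^ l * (transD ((0 : ℤ), (1 : ℤ))) ^ (i.1.2 + 1))
              (transD (1, 0) g) := by
          have := congrArg (fun T : ((ℤ × ℤ) → ℂ) →ₗ[ℂ] ((ℤ × ℤ) → ℂ) => T g) hmul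
          simpa only [Module.End.mul_apply] using this
        rw [e3, hg1, map_zero]
        rfl
      set h : (ℤ × ℤ) → ℂ :=
        g - ∑ i : {x : ℕ × ℕ // x.1 + x.2 ≤ q}, d i • phi Q i.1.1 (i.1.2 + 1) with hhdef
      have hh2 : transD (0, 1) h = 0 := by
        simp only [hhdef, map_sub, map_sum, map_smul, D2_phi_succ hrec]
        rw [hd]
        exact sub_self _
      have hh1 : transD (1, 0) h = 0 := by
        rw [hhdef, map_sub, hg1, map_sum]
        have key : ∀ i ∈ Finset.univ,
            transD ((1 : ℤ), (0 : ℤ)) (d i • phi Q i.1.1 (i.1.2 + 1)) = 0 := by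
          intro i _
          rw [map_smul]
          cases hcase : i.1.1 with
          | zero => rw [D1_phi_zero h0, smul_zero]
          | succ l => rw [hdvanish i l hcase, zero_smul]
        rw [Finset.sum_congr rfl key, Finset.sum_const_zero]
        simp
      have hconst : h = h (0, 0) • phi Q 0 0 := const_fun h0 hh1 hh2
      have hf_eq : f = h (0, 0) • phi Q 0 0 +
          (∑ i : {x : ℕ × ℕ // x.1 + x.2 ≤ q}, d i • phi Q i.1.1 (i.1.2 + 1)) +
          ∑ i : {x : ℕ × ℕ // x.1 + x.2 ≤ q}, c i • phi Q (i.1.1 + 1) i.1.2 := by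
        rw [← hconst, hhdef, hgdef]
        abel
      rw [hf_eq]
      refine add_mem (add_mem ?_ ?_) ?_
      · exact Submodule.smul_mem _ _
          (Submodule.subset_span ⟨⟨(0, 0), by omega⟩, rfl⟩)
      · exact Submodule.sum_mem _ fun i _ => Submodule.smul_mem _ _
          (Submodule.subset_span ⟨⟨(i.1.1, i.1.2 + 1), by have := i.2; omega⟩, rfl⟩)
      · exact Submodule.sum_mem _ fun i _ => Submodule.smul_mem _ _
          (Submodule.subset_span ⟨⟨(i.1.1 + 1, i.1.2), by have := i.2; omega⟩, rfl⟩)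

end Main

/-- The space `Map(Δ, ℂ)^{Δ,q+1}` of invariants of order `q+1` has dimension
`(q+1)(q+2)/2` over `ℂ`, with basis the functions `φ^{(l,m)}`, `l, m ≥ 0`, `l + m ≤ q`
(i.e. that family is linearly independent and spans `Map(Δ, ℂ)^{Δ,q+1}`). -/
theorem stmt8 (Q : ℕ → Polynomial ℚ)
    (h0 : Q 0 = 1)
    (hrec : ∀ n : ℕ, (Q (n + 1)).comp (Polynomial.X + 1) - Q (n + 1) = Q n)
    (hval : ∀ n : ℕ, 1 ≤ n → (Q n).eval 0 = 0)
    (q : ℕ) :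
    Module.finrank ℂ (HI (q + 1)) = (q + 1) * (q + 2) / 2 ∧
    LinearIndependent ℂ
      (fun x : {x : ℕ × ℕ // x.1 + x.2 ≤ q} => phi Q x.1.1 x.1.2) ∧
    Submodule.span ℂ
        (Set.range (fun x : {x : ℕ × ℕ // x.1 + x.2 ≤ q} => phi Q x.1.1 x.1.2)) =
      HI (q + 1) := by
  have hli := phi_linearIndependent h0 hrec hval q
  have hspan := le_antisymm (span_le_HI h0 hrec q) (HI_le_span h0 hrec hval q)
  refine ⟨?_, hli, hspan⟩
  rw [← hspan, finrank_span_eq_card hli, card_idx]
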